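/- Let $C = (C_{\bullet,\bullet}, \bar{d}, \bar{s}, \bar{t}, d, s, t)$ be a bi-paracyclic $k$-module. Then the diagonal $\mathrm{Diag}_m(C) = C_{m,m}$ with operators $(\bar{d}d, \bar{s}s, \bar{t}t)$ is a paracyclic $k$-module. If moreover $C$ is a cylindrical module, i.e., $\bar{t}^{p+1}t^{q+1} = 1$ on $C_{p,q}$, then $\mathrm{Diag}(C)$ is a cyclic $k$-module: $(\bar{t}t)^{m+1} = 1$ on $C_{m,m}$. -/

import Mathlib

/-!
Write `d̄_j`, `s̄_j` for the row operators and `d_j`, `s_j` for the column ones. Since `t̄`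
commutes with the vertical operators and `t` with the horizontal ones, the faces and
degeneracies of the diagonal split as `(d̄d)_j = d̄_j d_j` and `(s̄s)_j = s̄_j s_j`, and every
horizontal face or degeneracy commutes with every vertical one. A simplicial identity for the
diagonal is therefore the composite of the same identity in a row and in a column. Similarly
`t̄t = d̄ s̄ d s = d̄ d s̄ s`, and `(t̄t)^{m+1} = t̄^{m+1} t^{m+1}` because `t̄` and `t` commute.
-/

noncomputable section

variable (k : Type) [CommRing k]

structure ParacyclicData (C : ℕ → Type) [∀ n, AddCommGroup (C n)] [∀ n, Module k (C n)] where
  d : ∀ n, C (n + 1) →ₗ[k] C n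
  s : ∀ n, C n →ₗ[k] C (n + 1)
  t : ∀ n, C n ≃ₗ[k] C n

variable {k} {C : ℕ → Type} [∀ n, AddCommGroup (C n)] [∀ n, Module k (C n)]

def ParacyclicData.face (P : ParacyclicData k C) (n j : ℕ) : C (n + 1) →ₗ[k] C n :=
  (↑(P.t n ^ j) : C n →ₗ[k] C n) ∘ₗ P.d n ∘ₗ
    (↑((P.t (n + 1))⁻¹ ^ (j + 1)) : C (n + 1) →ₗ[k] C (n + 1))

def ParacyclicData.deg (P : ParacyclicData k C) (n j : ℕ) : C n →ₗ[k] C (n + 1) :=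
  (↑(P.t (n + 1) ^ (j + 1)) : C (n + 1) →ₗ[k] C (n + 1)) ∘ₗ P.s n ∘ₗ
    (↑((P.t n)⁻¹ ^ (j + 1)) : C n →ₗ[k] C n)

structure IsParacyclic (P : ParacyclicData k C) : Prop where
  t_eq : ∀ n, (↑(P.t n) : C n →ₗ[k] C n) = (P.d n) ∘ₗ (P.s n)
  face_face : ∀ n i j, i < j → j ≤ n + 2 →
    (P.face n i) ∘ₗ (P.face (n + 1) j) = (P.face n (j - 1)) ∘ₗ (P.face (n + 1) i)
  deg_deg : ∀ n i j, i ≤ j → j ≤ n →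
    (P.deg (n + 1) i) ∘ₗ (P.deg n j) = (P.deg (n + 1) (j + 1)) ∘ₗ (P.deg n i)
  face_deg_lt : ∀ n i j, i < j → j ≤ n + 1 →
    (P.face (n + 1) i) ∘ₗ (P.deg (n + 1) j) = (P.deg n (j - 1)) ∘ₗ (P.face n i)
  face_deg_eq : ∀ n j, j ≤ n →
    (P.face n j) ∘ₗ (P.deg n j) = LinearMap.id ∧ (P.face n (j + 1)) ∘ₗ (P.deg n j) = LinearMap.id
  face_deg_gt : ∀ n i j, j + 1 < i → i ≤ n + 2 →
    (P.face (n + 1) i) ∘ₗ (P.deg (n + 1) j) = (P.deg n j) ∘ₗ (P.face n (i - 1))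

section Twist

variable {A B A' B' : Type} [AddCommGroup A] [Module k A] [AddCommGroup B] [Module k B]
  [AddCommGroup A'] [Module k A'] [AddCommGroup B'] [Module k B']

theorem pow_apply_of_comp_eq {f : A →ₗ[k] B} {e : A ≃ₗ[k] A} {e' : B ≃ₗ[k] B}
    (h : f ∘ₗ e = e' ∘ₗ f) (n : ℕ) (x : A) : f ((e ^ n) x) = (e' ^ n) (f x) := by
  induction n with
  | zero => rfl
  | succ n ih =>
    simp only [pow_succ', LinearEquiv.mul_apply, ← ih]
    exact LinearMap.congr_fun h _

theorem inv_pow_apply_of_comp_eq {f : A →ₗ[k] B} {e : A ≃ₗ[k] A} {e' : B ≃ₗ[k] B}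
    (h : f ∘ₗ e = e' ∘ₗ f) (n : ℕ) (x : A) : f ((e⁻¹ ^ n) x) = (e'⁻¹ ^ n) (f x) := by
  refine pow_apply_of_comp_eq (LinearMap.ext fun y => e'.injective ?_) n x
  simpa using (LinearMap.congr_fun h (e.symm y)).symm

theorem Commute.linearEquiv_apply {e e' : A ≃ₗ[k] A} (h : Commute e e') (x : A) :
    e (e' x) = e' (e x) :=
  DFunLike.congr_fun h x

/-- Faces and degeneracies of a paracyclic module are definitionally of this form. -/
def twist (e : B ≃ₗ[k] B) (e' : A ≃ₗ[k] A) (a b : ℕ) (f : A →ₗ[k] B) : A →ₗ[k] B :=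
  ↑(e ^ a) ∘ₗ f ∘ₗ ↑(e'⁻¹ ^ b)

/-- `h, h'` are horizontal and `v, v'` vertical sides of a commutative square; the `σ`s pass
through the vertical maps and the `τ`s through the horizontal ones. -/
theorem twist_comp_twist_comm {h : A →ₗ[k] B} {h' : A' →ₗ[k] B'} {v : A →ₗ[k] A'}
    {v' : B →ₗ[k] B'} {σA τA : A ≃ₗ[k] A} {σB τB : B ≃ₗ[k] B} {σA' τA' : A' ≃ₗ[k] A'}
    {σB' τB' : B' ≃ₗ[k] B'} (hsq : v' ∘ₗ h = h' ∘ₗ v)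
    (hv : v ∘ₗ σA = σA' ∘ₗ v) (hv' : v' ∘ₗ σB = σB' ∘ₗ v')
    (hh : h ∘ₗ τA = τB ∘ₗ h) (hh' : h' ∘ₗ τA' = τB' ∘ₗ h')
    (cA : Commute σA τA) (cB : Commute σB τB) (cA' : Commute σA' τA') (cB' : Commute σB' τB')
    (a b c d : ℕ) :
    twist τB' τB c d v' ∘ₗ twist σB σA a b h = twist σB' σA' a b h' ∘ₗ twist τA' τA c d v := by
  ext x
  simp only [twist, LinearMap.comp_apply, LinearEquiv.coe_coe]
  rw [(cB.inv_right.pow_pow a d).symm.linearEquiv_apply, ← inv_pow_apply_of_comp_eq hh,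
    pow_apply_of_comp_eq hv', (cB'.pow_pow a c).symm.linearEquiv_apply,
    ← LinearMap.comp_apply v' h, hsq, LinearMap.comp_apply,
    ← pow_apply_of_comp_eq hh', (cA.inv_inv.pow_pow b d).symm.linearEquiv_apply,
    inv_pow_apply_of_comp_eq hv, (cA'.inv_left.pow_pow b c).symm.linearEquiv_apply]

theorem twist_mul_comp {h : B →ₗ[k] B'} {v : A →ₗ[k] B} {α β : A ≃ₗ[k] A}
    {α' β' : B ≃ₗ[k] B} {α'' β'' : B' ≃ₗ[k] B'}
    (hh : h ∘ₗ β' = β'' ∘ₗ h) (hv : v ∘ₗ α = α' ∘ₗ v)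
    (c : Commute α β) (c' : Commute α' β') (c'' : Commute α'' β'') (a b : ℕ) :
    twist (α'' * β'') (α * β) a b (h ∘ₗ v) = twist α'' α' a b h ∘ₗ twist β' β a b v := by
  ext x
  simp only [twist, LinearMap.comp_apply, LinearEquiv.coe_coe, c''.mul_pow,
    c.eq, mul_inv_rev, c.inv_inv.mul_pow, LinearEquiv.mul_apply]
  rw [(c'.inv_left.pow_pow b a).linearEquiv_apply, pow_apply_of_comp_eq hh,
    ← inv_pow_apply_of_comp_eq hv]

theorem comp_comp_comp_of_comp_eq {B'' C : Type} [AddCommGroup B''] [Module k B'']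
    [AddCommGroup C] [Module k C] {f : B' →ₗ[k] C} {g : B →ₗ[k] B'} {g' : B'' →ₗ[k] B'}
    {h : A →ₗ[k] B} {h' : A →ₗ[k] B''} {u : A' →ₗ[k] A} (hgh : g ∘ₗ h = g' ∘ₗ h') :
    (f ∘ₗ g) ∘ₗ (h ∘ₗ u) = (f ∘ₗ g') ∘ₗ (h' ∘ₗ u) := by
  ext x
  exact congrArg f (LinearMap.congr_fun hgh (u x))

end Twist

section BiParacyclic

variable {D : ℕ → ℕ → Type} [∀ p q, AddCommGroup (D p q)] [∀ p q, Module k (D p q)]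
variable (db : ∀ p q, D (p + 1) q →ₗ[k] D p q) (sb : ∀ p q, D p q →ₗ[k] D (p + 1) q)
variable (tb : ∀ p q, D p q ≃ₗ[k] D p q)
variable (dv : ∀ p q, D p (q + 1) →ₗ[k] D p q) (sv : ∀ p q, D p q →ₗ[k] D p (q + 1))
variable (tv : ∀ p q, D p q ≃ₗ[k] D p q)

/-- The row data `(C_{•,q}, d̄, s̄, t̄)`. -/
def rowData (q : ℕ) : ParacyclicData k (fun p => D p q) where
  d := fun p => db p q
  s := fun p => sb p q
  t := fun p => tb p q

/-- The column data `(C_{p,•}, d, s, t)`. -/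
def colData (p : ℕ) : ParacyclicData k (fun q => D p q) where
  d := fun q => dv p q
  s := fun q => sv p q
  t := fun q => tv p q

/-- The diagonal data `(C_{m,m}, d̄d, s̄s, t̄t)`. -/
def diagData : ParacyclicData k (fun m => D m m) where
  d := fun m => (db m m) ∘ₗ (dv (m + 1) m)
  s := fun m => (sb m (m + 1)) ∘ₗ (sv m m)
  t := fun m => tb m m * tv m m

theorem diagData_face (htt : ∀ p q, tb p q * tv p q = tv p q * tb p q)
    (hdt : ∀ p q, (↑(tv p q) : D p q →ₗ[k] D p q) ∘ₗ (db p q) = (db p q) ∘ₗ ↑(tv (p + 1) q))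
    (htd : ∀ p q, (↑(tb p q) : D p q →ₗ[k] D p q) ∘ₗ (dv p q) = (dv p q) ∘ₗ ↑(tb p (q + 1)))
    (m j : ℕ) :
    (diagData db sb tb dv sv tv).face m j
      = (rowData db sb tb m).face m j ∘ₗ (colData dv sv tv (m + 1)).face m j :=
  twist_mul_comp (hdt m m).symm (htd (m + 1) m).symm (htt _ _) (htt _ _) (htt _ _) j (j + 1)

theorem diagData_deg (htt : ∀ p q, tb p q * tv p q = tv p q * tb p q)
    (hst : ∀ p q, (↑(tv (p + 1) q) : D (p + 1) q →ₗ[k] D (p + 1) q) ∘ₗ (sb p q)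
      = (sb p q) ∘ₗ ↑(tv p q))
    (hts : ∀ p q, (↑(tb p (q + 1)) : D p (q + 1) →ₗ[k] D p (q + 1)) ∘ₗ (sv p q)
      = (sv p q) ∘ₗ ↑(tb p q))
    (m j : ℕ) :
    (diagData db sb tb dv sv tv).deg m j
      = (rowData db sb tb (m + 1)).deg m j ∘ₗ (colData dv sv tv m).deg m j :=
  twist_mul_comp (hst m (m + 1)).symm (hts m m).symm (htt _ _) (htt _ _) (htt _ _) (j + 1) (j + 1)

theorem colData_face_comp_rowData_face (htt : ∀ p q, tb p q * tv p q = tv p q * tb p q)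
    (hdd : ∀ p q, (db p q) ∘ₗ (dv (p + 1) q) = (dv p q) ∘ₗ (db p (q + 1)))
    (hdt : ∀ p q, (↑(tv p q) : D p q →ₗ[k] D p q) ∘ₗ (db p q) = (db p q) ∘ₗ ↑(tv (p + 1) q))
    (htd : ∀ p q, (↑(tb p q) : D p q →ₗ[k] D p q) ∘ₗ (dv p q) = (dv p q) ∘ₗ ↑(tb p (q + 1)))
    (p q i j : ℕ) :
    (colData dv sv tv p).face q i ∘ₗ (rowData db sb tb (q + 1)).face p j
      = (rowData db sb tb q).face p j ∘ₗ (colData dv sv tv (p + 1)).face q i :=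
  twist_comp_twist_comm (hdd p q).symm (htd _ _).symm (htd _ _).symm (hdt _ _).symm
    (hdt _ _).symm (htt _ _) (htt _ _) (htt _ _) (htt _ _) j (j + 1) i (i + 1)

theorem colData_face_comp_rowData_deg (htt : ∀ p q, tb p q * tv p q = tv p q * tb p q)
    (hsd : ∀ p q, (sb p q) ∘ₗ (dv p q) = (dv (p + 1) q) ∘ₗ (sb p (q + 1)))
    (hst : ∀ p q, (↑(tv (p + 1) q) : D (p + 1) q →ₗ[k] D (p + 1) q) ∘ₗ (sb p q)
      = (sb p q) ∘ₗ ↑(tv p q))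
    (htd : ∀ p q, (↑(tb p q) : D p q →ₗ[k] D p q) ∘ₗ (dv p q) = (dv p q) ∘ₗ ↑(tb p (q + 1)))
    (p q i j : ℕ) :
    (colData dv sv tv (p + 1)).face q i ∘ₗ (rowData db sb tb (q + 1)).deg p j
      = (rowData db sb tb q).deg p j ∘ₗ (colData dv sv tv p).face q i :=
  twist_comp_twist_comm (hsd p q).symm (htd _ _).symm (htd _ _).symm (hst _ _).symm
    (hst _ _).symm (htt _ _) (htt _ _) (htt _ _) (htt _ _) (j + 1) (j + 1) i (i + 1)

theorem colData_deg_comp_rowData_face (htt : ∀ p q, tb p q * tv p q = tv p q * tb p q)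
    (hds : ∀ p q, (db p (q + 1)) ∘ₗ (sv (p + 1) q) = (sv p q) ∘ₗ (db p q))
    (hdt : ∀ p q, (↑(tv p q) : D p q →ₗ[k] D p q) ∘ₗ (db p q) = (db p q) ∘ₗ ↑(tv (p + 1) q))
    (hts : ∀ p q, (↑(tb p (q + 1)) : D p (q + 1) →ₗ[k] D p (q + 1)) ∘ₗ (sv p q)
      = (sv p q) ∘ₗ ↑(tb p q))
    (p q i j : ℕ) :
    (colData dv sv tv p).deg q i ∘ₗ (rowData db sb tb q).face p j
      = (rowData db sb tb (q + 1)).face p j ∘ₗ (colData dv sv tv (p + 1)).deg q i :=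
  twist_comp_twist_comm (hds p q).symm (hts _ _).symm (hts _ _).symm (hdt _ _).symm
    (hdt _ _).symm (htt _ _) (htt _ _) (htt _ _) (htt _ _) j (j + 1) (i + 1) (i + 1)

theorem colData_deg_comp_rowData_deg (htt : ∀ p q, tb p q * tv p q = tv p q * tb p q)
    (hss : ∀ p q, (sb p (q + 1)) ∘ₗ (sv p q) = (sv (p + 1) q) ∘ₗ (sb p q))
    (hst : ∀ p q, (↑(tv (p + 1) q) : D (p + 1) q →ₗ[k] D (p + 1) q) ∘ₗ (sb p q)
      = (sb p q) ∘ₗ ↑(tv p q))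
    (hts : ∀ p q, (↑(tb p (q + 1)) : D p (q + 1) →ₗ[k] D p (q + 1)) ∘ₗ (sv p q)
      = (sv p q) ∘ₗ ↑(tb p q))
    (p q i j : ℕ) :
    (colData dv sv tv (p + 1)).deg q i ∘ₗ (rowData db sb tb q).deg p j
      = (rowData db sb tb (q + 1)).deg p j ∘ₗ (colData dv sv tv p).deg q i :=
  twist_comp_twist_comm (hss p q).symm (hts _ _).symm (hts _ _).symm (hst _ _).symm
    (hst _ _).symm (htt _ _) (htt _ _) (htt _ _) (htt _ _) (j + 1) (j + 1) (i + 1) (i + 1)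

/-- The diagonal of a bi-paracyclic module is paracyclic, and if the
bi-paracyclic module is cylindrical (`t̄^{p+1} t^{q+1} = 1` on `C_{p,q}`), the
diagonal is a cyclic module (`(t̄t)^{m+1} = 1` on `C_{m,m}`). -/
theorem diagonal_of_biparacyclic
    (hrow : ∀ q, IsParacyclic (rowData db sb tb q))
    (hcol : ∀ p, IsParacyclic (colData dv sv tv p))
    -- all horizontal operators commute with all vertical operators
    (hdd : ∀ p q, (db p q) ∘ₗ (dv (p + 1) q) = (dv p q) ∘ₗ (db p (q + 1)))
    (hds : ∀ p q, (db p (q + 1)) ∘ₗ (sv (p + 1) q) = (sv p q) ∘ₗ (db p q))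
    (hdt : ∀ p q, (↑(tv p q) : D p q →ₗ[k] D p q) ∘ₗ (db p q) = (db p q) ∘ₗ ↑(tv (p + 1) q))
    (hsd : ∀ p q, (sb p q) ∘ₗ (dv p q) = (dv (p + 1) q) ∘ₗ (sb p (q + 1)))
    (hss : ∀ p q, (sb p (q + 1)) ∘ₗ (sv p q) = (sv (p + 1) q) ∘ₗ (sb p q))
    (hst : ∀ p q, (↑(tv (p + 1) q) : D (p + 1) q →ₗ[k] D (p + 1) q) ∘ₗ (sb p q)
      = (sb p q) ∘ₗ ↑(tv p q))
    (htd : ∀ p q, (↑(tb p q) : D p q →ₗ[k] D p q) ∘ₗ (dv p q) = (dv p q) ∘ₗ ↑(tb p (q + 1)))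
    (hts : ∀ p q, (↑(tb p (q + 1)) : D p (q + 1) →ₗ[k] D p (q + 1)) ∘ₗ (sv p q)
      = (sv p q) ∘ₗ ↑(tb p q))
    (htt : ∀ p q, tb p q * tv p q = tv p q * tb p q) :
    IsParacyclic (diagData db sb tb dv sv tv)
    ∧ ((∀ p q, (tb p q) ^ (p + 1) * (tv p q) ^ (q + 1) = 1) →
        ∀ m, (tb m m * tv m m) ^ (m + 1) = 1) := by
  have face := diagData_face db sb tb dv sv tv htt hdt htd
  have deg := diagData_deg db sb tb dv sv tv htt hst hts
  have ff := colData_face_comp_rowData_face db sb tb dv sv tv htt hdd hdt htd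
  have fs := colData_face_comp_rowData_deg db sb tb dv sv tv htt hsd hst htd
  have sf := colData_deg_comp_rowData_face db sb tb dv sv tv htt hds hdt hts
  have ss := colData_deg_comp_rowData_deg db sb tb dv sv tv htt hss hst hts
  refine ⟨⟨fun n => ?_, fun n i j hij hj => ?_, fun n i j hij hj => ?_,
    fun n i j hij hj => ?_, fun n j hj => ?_, fun n i j hij hj => ?_⟩,
    fun hcyl m => Commute.mul_pow (htt m m) (m + 1) ▸ hcyl m m⟩
  · exact (congrArg₂ LinearMap.comp ((hrow n).t_eq n) ((hcol n).t_eq n)).trans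
      (comp_comp_comp_of_comp_eq (hsd n n))
  · simp only [face, comp_comp_comp_of_comp_eq (ff _ _ _ _)]
    rw [(hrow n).face_face n i j hij hj, (hcol _).face_face n i j hij hj]
  · simp only [deg, comp_comp_comp_of_comp_eq (ss _ _ _ _)]
    rw [(hrow _).deg_deg n i j hij hj, (hcol n).deg_deg n i j hij hj]
  · simp only [face, deg, comp_comp_comp_of_comp_eq (fs _ _ _ _),
      comp_comp_comp_of_comp_eq (sf _ _ _ _)]
    rw [(hrow _).face_deg_lt n i j hij hj, (hcol _).face_deg_lt n i j hij hj]
  · simp only [face, deg, comp_comp_comp_of_comp_eq (fs _ _ _ _),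
      (hrow n).face_deg_eq n j hj, (hcol n).face_deg_eq n j hj, LinearMap.id_comp, and_self]
  · simp only [face, deg, comp_comp_comp_of_comp_eq (fs _ _ _ _),
      comp_comp_comp_of_comp_eq (sf _ _ _ _)]
    rw [(hrow _).face_deg_gt n i j hij hj, (hcol _).face_deg_gt n i j hij hj]

end BiParacyclic
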